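/- Let k ≥ 2, let S be a non-trivial simplicial k-circuit, and let uv be an edge of G(S). Then there exist m ≥ 1 and non-trivial simplicial k-circuits S₁, …, S_m such that: (a) S_i/uv is a simplicial k-circuit for each i; (b) every simplex of S_i that does not belong to S is a (k+1)-element clique of G(S) containing {u,v}; (c) every simplex of S not containing {u,v} belongs to exactly one S_i, and S = S₁ △ ⋯ △ S_m, where △ denotes symmetric difference; (d) uv ∈ E(S_i) for each i, and E(S₁) ∪ ⋯ ∪ E(S_m) = E(S); and (e) for every nonempty proper subset I of {1,…,m} there exist j ∉ I and a (k+1)-element set K with {u,v} ⊆ K such that K is a clique of G(S), K ∉ S, and K belongs to both △_{i∈I} S_i and S_j. -/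

import Mathlib

/-! ### Simplicial multicomplexes over the vertex type ℕ -/

/-- The vertex set of a simplicial multicomplex: the union of its simplices. -/
def vertexSet (S : Multiset (Finset ℕ)) : Finset ℕ := S.toFinset.sup id

lemma mem_vertexSet_of_mem {S : Multiset (Finset ℕ)} {U : Finset ℕ} {x : ℕ}
    (hU : U ∈ S) (hx : x ∈ U) : x ∈ vertexSet S :=
  Finset.mem_of_subset (Finset.le_sup (f := id) (Multiset.mem_toFinset.2 hU)) hx

/-- The number of simplices of `S` containing `F`, counted with multiplicity. -/
def simplexCount (S : Multiset (Finset ℕ)) (F : Finset ℕ) : ℕ :=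
  Multiset.countP (fun U => F ⊆ U) S

/-- `S` is a simplicial `k`-multicomplex: all its members are `(k+1)`-element sets. -/
def IsMultiComplex (k : ℕ) (S : Multiset (Finset ℕ)) : Prop :=
  ∀ U ∈ S, U.card = k + 1

/-- The boundary of `S`: all `k`-element sets lying in an odd number of simplices of `S`,
counted with multiplicity. -/
def boundarySet (k : ℕ) (S : Multiset (Finset ℕ)) : Set (Finset ℕ) :=
  {F | F.card = k ∧ Odd (simplexCount S F)}

/-- A simplicial `k`-cycle: a simplicial `k`-multicomplex with empty boundary. -/
def IsSimpCycle (k : ℕ) (S : Multiset (Finset ℕ)) : Prop :=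
  IsMultiComplex k S ∧ ∀ F : Finset ℕ, F.card = k → Even (simplexCount S F)

/-- A simplicial `k`-circuit: a nonempty simplicial `k`-cycle, no proper nonempty
sub-multiset of which is a simplicial `k`-cycle. -/
def IsSimpCircuit (k : ℕ) (S : Multiset (Finset ℕ)) : Prop :=
  IsSimpCycle k S ∧ S ≠ 0 ∧
    ∀ T : Multiset (Finset ℕ), T ≤ S → T ≠ 0 → T ≠ S → ¬ IsSimpCycle k T

/-- A trivial simplicial circuit consists of two copies of a single simplex. -/
def IsTrivialSimpCircuit (S : Multiset (Finset ℕ)) : Prop :=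
  ∃ U : Finset ℕ, S = {U, U}

/-- Symmetric difference of multisets (for multisets with no repeated members this is the
usual symmetric difference of sets). -/
def symmDiffM (S T : Multiset (Finset ℕ)) : Multiset (Finset ℕ) := (S - T) + (T - S)

/-- Contraction of the vertex `v` onto the vertex `u`: delete every simplex containing both
`u` and `v`, and replace every simplex `U` containing `v` but not `u` by `(U∖{v})∪{u}`. -/
def contractS (S : Multiset (Finset ℕ)) (u v : ℕ) : Multiset (Finset ℕ) :=
  (S.filter fun U => ¬ (u ∈ U ∧ v ∈ U)).map fun U =>
    if v ∈ U then insert u (U.erase v) else U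

/-- The link of an edge `uv` of `S`. -/
def linkS (S : Multiset (Finset ℕ)) (u v : ℕ) : Multiset (Finset ℕ) :=
  (S.filter fun U => u ∈ U ∧ v ∈ U).map fun U => U \ {u, v}

/-- `S` is strongly connected: any two simplices are joined by a sequence of simplices of `S`
in which consecutive simplices share at least `k` vertices. -/
def StronglyConnectedS (k : ℕ) (S : Multiset (Finset ℕ)) : Prop :=
  ∀ U ∈ S, ∀ W ∈ S,
    Relation.ReflTransGen (fun A B => A ∈ S ∧ B ∈ S ∧ k ≤ (A ∩ B).card) U W

/-- A `k`-pseudomanifold: a nonempty strongly connected simplicial `k`-complex in which every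
`k`-element subset of a simplex is contained in exactly two simplices. -/
def IsPseudomanifold (k : ℕ) (S : Multiset (Finset ℕ)) : Prop :=
  S.Nodup ∧ IsMultiComplex k S ∧ S ≠ 0 ∧ StronglyConnectedS k S ∧
    ∀ F : Finset ℕ, F.card = k → (∃ U ∈ S, F ⊆ U) → simplexCount S F = 2

/-- Stacked `k`-spheres: obtained from the boundary of a `(k+1)`-simplex by repeated
barycentric subdivisions of facets. -/
inductive IsStackedSphere : ℕ → Multiset (Finset ℕ) → Prop
  | base (k : ℕ) (W : Finset ℕ) (hW : W.card = k + 2) :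
      IsStackedSphere k (W.powersetCard (k + 1)).val
  | subdiv (k : ℕ) (S : Multiset (Finset ℕ)) (U : Finset ℕ) (w : ℕ)
      (hS : IsStackedSphere k S) (hU : U ∈ S) (hw : w ∉ vertexSet S) :
      IsStackedSphere k (symmDiffM S ((insert w U).powersetCard (k + 1)).val)

/-- `S` is a copy of the simplicial `k`-circuit `ℒ_k`. -/
def IsCopyOfL (k : ℕ) (S : Multiset (Finset ℕ)) : Prop :=
  ∃ (U : Finset ℕ) (x y : ℕ), U.card = k + 1 ∧ x ∉ U ∧ y ∉ U ∧ x ≠ y ∧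
    vertexSet S = U ∪ {x, y} ∧
    S = ((U.image fun w => insert x (U.erase w)) ∪ (U.image fun w => insert y (U.erase w))).val

open scoped Classical in
/-- The family `S†`: all `(k+1)`-element subsets `K` of `V(S)` containing `u` and `v` such
that both `K∖{u}` and `K∖{v}` are contained in some simplex of `S`. -/
noncomputable def faceDag (k : ℕ) (S : Multiset (Finset ℕ)) (u v : ℕ) : Multiset (Finset ℕ) :=
  ((vertexSet S).powersetCard (k + 1)).val.filter fun K =>
    u ∈ K ∧ v ∈ K ∧ (∃ U ∈ S, K.erase u ⊆ U) ∧ (∃ U ∈ S, K.erase v ⊆ U)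

open scoped Classical in
/-- The family `S*`: the members `K` of `S†` with `K∖{u}` and `K∖{v}` in the boundary of `S`. -/
noncomputable def faceStar (k : ℕ) (S : Multiset (Finset ℕ)) (u v : ℕ) : Multiset (Finset ℕ) :=
  (faceDag k S u v).filter fun K =>
    K.erase u ∈ boundarySet k S ∧ K.erase v ∈ boundarySet k S

/-! ### Finite graphs with vertices in ℕ -/

/-- A finite simple graph with vertex set a finite subset of `ℕ`. -/
structure FinGraph : Type where
  verts : Finset ℕ
  Adj : ℕ → ℕ → Prop
  symm : ∀ ⦃x y⦄, Adj x y → Adj y x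
  loopless : ∀ x, ¬ Adj x x
  adj_mem : ∀ ⦃x y⦄, Adj x y → x ∈ verts ∧ y ∈ verts

namespace FinGraph

/-- The number of edges of `G`. -/
noncomputable def edgeCount (G : FinGraph) : ℕ := (Sym2.fromRel (r := G.Adj) ⟨fun _ _ h => G.symm h⟩).ncard

/-- `G` is connected. -/
def Connected (G : FinGraph) : Prop :=
  G.verts.Nonempty ∧ ∀ x ∈ G.verts, ∀ y ∈ G.verts, Relation.ReflTransGen G.Adj x y

/-- Deletion of a set of vertices. -/
def deleteVerts (G : FinGraph) (K : Finset ℕ) : FinGraph where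
  verts := G.verts \ K
  Adj x y := G.Adj x y ∧ x ∉ K ∧ y ∉ K
  symm := by
    rintro x y ⟨h, hx, hy⟩
    exact ⟨G.symm h, hy, hx⟩
  loopless := by
    rintro x ⟨h, -, -⟩
    exact G.loopless x h
  adj_mem := by
    rintro x y ⟨h, hx, hy⟩
    exact ⟨Finset.mem_sdiff.2 ⟨(G.adj_mem h).1, hx⟩, Finset.mem_sdiff.2 ⟨(G.adj_mem h).2, hy⟩⟩

/-- `G` is `m`-connected: it has at least `m+1` vertices and deleting any set of fewer than
`m` vertices leaves a connected graph. -/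
def ConnectedGE (m : ℕ) (G : FinGraph) : Prop :=
  m + 1 ≤ G.verts.card ∧ ∀ K : Finset ℕ, K.card < m → (G.deleteVerts K).Connected

/-- `G` is a complete graph on `n` vertices. -/
def IsCompleteOn (G : FinGraph) (n : ℕ) : Prop :=
  G.verts.card = n ∧ ∀ x ∈ G.verts, ∀ y ∈ G.verts, x ≠ y → G.Adj x y

/-- `H` is a subgraph of `G`. -/
def IsSubgraph (H G : FinGraph) : Prop :=
  H.verts ⊆ G.verts ∧ ∀ ⦃x y⦄, H.Adj x y → G.Adj x y

/-- `X` is a clique of `G`. -/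
def IsClique (G : FinGraph) (X : Finset ℕ) : Prop :=
  X ⊆ G.verts ∧ ∀ x ∈ X, ∀ y ∈ X, x ≠ y → G.Adj x y

/-- The union of two graphs. -/
def union (G H : FinGraph) : FinGraph where
  verts := G.verts ∪ H.verts
  Adj x y := G.Adj x y ∨ H.Adj x y
  symm := by
    rintro x y (h | h)
    exacts [Or.inl (G.symm h), Or.inr (H.symm h)]
  loopless := by
    rintro x (h | h)
    exacts [G.loopless x h, H.loopless x h]
  adj_mem := by
    rintro x y (h | h)
    · exact ⟨Finset.mem_union_left _ (G.adj_mem h).1, Finset.mem_union_left _ (G.adj_mem h).2⟩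
    · exact ⟨Finset.mem_union_right _ (H.adj_mem h).1, Finset.mem_union_right _ (H.adj_mem h).2⟩

/-- Adding the edge `uv` to `G` (for vertices `u ≠ v` of `G`). -/
def addEdge (G : FinGraph) (u v : ℕ) : FinGraph where
  verts := G.verts
  Adj x y := G.Adj x y ∨
    (x ≠ y ∧ x ∈ G.verts ∧ y ∈ G.verts ∧ ((x = u ∧ y = v) ∨ (x = v ∧ y = u)))
  symm := by
    rintro x y (h | ⟨hxy, hx, hy, h | h⟩)
    · exact Or.inl (G.symm h)
    · exact Or.inr ⟨hxy.symm, hy, hx, Or.inr ⟨h.2, h.1⟩⟩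
    · exact Or.inr ⟨hxy.symm, hy, hx, Or.inl ⟨h.2, h.1⟩⟩
  loopless := by
    rintro x (h | ⟨hxx, -⟩)
    · exact G.loopless x h
    · exact hxx rfl
  adj_mem := by
    rintro x y (h | ⟨-, hx, hy, -⟩)
    · exact G.adj_mem h
    · exact ⟨hx, hy⟩

/-- Adding a set `B` of unordered pairs of vertices to `G` as edges. -/
def addEdges (G : FinGraph) (B : Finset (Sym2 ℕ)) : FinGraph where
  verts := G.verts
  Adj x y := G.Adj x y ∨ (x ≠ y ∧ x ∈ G.verts ∧ y ∈ G.verts ∧ s(x, y) ∈ B)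
  symm := by
    rintro x y (h | ⟨hxy, hx, hy, hB⟩)
    · exact Or.inl (G.symm h)
    · exact Or.inr ⟨hxy.symm, hy, hx, by rwa [Sym2.eq_swap]⟩
  loopless := by
    rintro x (h | ⟨hxx, -⟩)
    · exact G.loopless x h
    · exact hxx rfl
  adj_mem := by
    rintro x y (h | ⟨-, hx, hy, -⟩)
    · exact G.adj_mem h
    · exact ⟨hx, hy⟩

/-- Deleting the edge `uv` from `G`. -/
def deleteEdge (G : FinGraph) (u v : ℕ) : FinGraph where
  verts := G.verts
  Adj x y := G.Adj x y ∧ ¬ ((x = u ∧ y = v) ∨ (x = v ∧ y = u))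
  symm := by
    rintro x y ⟨h, hne⟩
    refine ⟨G.symm h, fun hc => hne ?_⟩
    rcases hc with ⟨h1, h2⟩ | ⟨h1, h2⟩
    · exact Or.inr ⟨h2, h1⟩
    · exact Or.inl ⟨h2, h1⟩
  loopless := by
    rintro x ⟨h, -⟩
    exact G.loopless x h
  adj_mem := by
    rintro x y ⟨h, -⟩
    exact G.adj_mem h

/-- The contraction `G/uv`: delete `v` and join `u` to every former neighbour of `v`
other than `u`. -/
def contract (G : FinGraph) (u v : ℕ) : FinGraph where
  verts := G.verts.erase v
  Adj x y := x ≠ y ∧ x ∈ G.verts ∧ y ∈ G.verts ∧ x ≠ v ∧ y ≠ v ∧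
    (G.Adj x y ∨ (x = u ∧ G.Adj v y) ∨ (y = u ∧ G.Adj v x))
  symm := by
    rintro x y ⟨hxy, hx, hy, hxv, hyv, h⟩
    refine ⟨hxy.symm, hy, hx, hyv, hxv, ?_⟩
    rcases h with h | h | h
    · exact Or.inl (G.symm h)
    · exact Or.inr (Or.inr h)
    · exact Or.inr (Or.inl h)
  loopless := by
    rintro x ⟨hxx, -⟩
    exact hxx rfl
  adj_mem := by
    rintro x y ⟨hxy, hx, hy, hxv, hyv, -⟩
    exact ⟨Finset.mem_erase.2 ⟨hxv, hx⟩, Finset.mem_erase.2 ⟨hyv, hy⟩⟩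

/-! ### Rigidity notions -/

/-- A realisation of `G` in `ℝ^d` is generic if the coordinates of the positions of the
vertices of `G` are algebraically independent over `ℚ`. -/
def IsGeneric (d : ℕ) (G : FinGraph) (p : ℕ → EuclideanSpace ℝ (Fin d)) : Prop :=
  AlgebraicIndependent ℚ fun vi : {x // x ∈ G.verts} × Fin d => p vi.1.1 vi.2

/-- `q` is an infinitesimal motion of `(G, p)`. -/
def IsInfMotion (d : ℕ) (G : FinGraph) (p q : ℕ → EuclideanSpace ℝ (Fin d)) : Prop :=
  ∀ ⦃x y⦄, G.Adj x y → inner ℝ (q x - q y) (p x - p y) = (0 : ℝ)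

/-- `q` is a trivial motion of `(G, p)`: it agrees on the vertices of `G` with a map of the
form `v ↦ A (p v) + b` with `A` skew-symmetric. -/
def IsTrivialMotion (d : ℕ) (G : FinGraph) (p q : ℕ → EuclideanSpace ℝ (Fin d)) : Prop :=
  ∃ (A : EuclideanSpace ℝ (Fin d) →ₗ[ℝ] EuclideanSpace ℝ (Fin d))
    (b : EuclideanSpace ℝ (Fin d)),
      (∀ x y : EuclideanSpace ℝ (Fin d), (inner ℝ (A x) y : ℝ) = -(inner ℝ x (A y) : ℝ)) ∧
        ∀ v ∈ G.verts, q v = A (p v) + b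

/-- `(G, p)` is infinitesimally rigid. -/
def IsInfRigid (d : ℕ) (G : FinGraph) (p : ℕ → EuclideanSpace ℝ (Fin d)) : Prop :=
  ∀ q : ℕ → EuclideanSpace ℝ (Fin d), IsInfMotion d G p q → IsTrivialMotion d G p q

/-- `G` is rigid in `ℝ^d`: every generic realisation is infinitesimally rigid. -/
def IsRigid (d : ℕ) (G : FinGraph) : Prop :=
  ∀ p : ℕ → EuclideanSpace ℝ (Fin d), G.IsGeneric d p → G.IsInfRigid d p

/-- Two realisations are equivalent if corresponding edges have equal lengths. -/
def Equivalent (d : ℕ) (G : FinGraph) (p q : ℕ → EuclideanSpace ℝ (Fin d)) : Prop :=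
  ∀ ⦃x y⦄, G.Adj x y → ‖p x - p y‖ = ‖q x - q y‖

/-- Two realisations are congruent if all pairs of vertices are at equal distances. -/
def Congruent (d : ℕ) (G : FinGraph) (p q : ℕ → EuclideanSpace ℝ (Fin d)) : Prop :=
  ∀ x ∈ G.verts, ∀ y ∈ G.verts, ‖p x - p y‖ = ‖q x - q y‖

/-- `G` is globally rigid in `ℝ^d`. -/
def IsGloballyRigid (d : ℕ) (G : FinGraph) : Prop :=
  ∀ p q : ℕ → EuclideanSpace ℝ (Fin d),
    G.IsGeneric d p → G.Equivalent d p q → G.Congruent d p q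

/-- `G` is `uv`-coincident rigid in `ℝ^d`: some realisation with `p u = p v` is
infinitesimally rigid. -/
def IsCoincidentRigid (d : ℕ) (G : FinGraph) (u v : ℕ) : Prop :=
  ∃ p : ℕ → EuclideanSpace ℝ (Fin d), p u = p v ∧ G.IsInfRigid d p

end FinGraph

/-- The graph `G(S)` of a simplicial multicomplex `S`. -/
def graphOf (S : Multiset (Finset ℕ)) : FinGraph where
  verts := vertexSet S
  Adj x y := x ≠ y ∧ ∃ U ∈ S, x ∈ U ∧ y ∈ U
  symm := by
    rintro x y ⟨hxy, U, hU, hx, hy⟩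
    exact ⟨hxy.symm, U, hU, hy, hx⟩
  loopless := by
    rintro x ⟨hxx, -⟩
    exact hxx rfl
  adj_mem := by
    rintro x y ⟨hxy, U, hU, hx, hy⟩
    exact ⟨mem_vertexSet_of_mem hU hx, mem_vertexSet_of_mem hU hy⟩

/-! ### Cleavage properties -/

/-- The `d`-cleavage property: `G` is `d`-connected and every `d`-element vertex set whose
removal disconnects `G` induces a clique of `G`. -/
def HasCleavage (d : ℕ) (G : FinGraph) : Prop :=
  G.ConnectedGE d ∧ ∀ X : Finset ℕ, X ⊆ G.verts → X.card = d →
    ¬ (G.deleteVerts X).Connected → G.IsClique X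

/-- A `(d+1)`-block of `G`: a subgraph that is a complete graph on `d+1` vertices or is
`(d+1)`-connected, and is maximal among subgraphs of `G` with this property. -/
def IsBlock (d : ℕ) (G D : FinGraph) : Prop :=
  D.IsSubgraph G ∧ (D.IsCompleteOn (d + 1) ∨ D.ConnectedGE (d + 1)) ∧
    ∀ D' : FinGraph, D'.IsSubgraph G → (D'.IsCompleteOn (d + 1) ∨ D'.ConnectedGE (d + 1)) →
      D.IsSubgraph D' → D' = D

/-- The strong `d`-cleavage property (for `d ≥ 4`): the `d`-cleavage property, and every
`(d+1)`-block is globally rigid in `ℝ^d`. -/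
def HasStrongCleavage (d : ℕ) (G : FinGraph) : Prop :=
  HasCleavage d G ∧ ∀ D : FinGraph, IsBlock d G D → D.IsGloballyRigid d

open scoped Finset

/-!
Contracting `uv` sends the simplices of `S` avoiding the edge `uv` onto the cycle `S/uv`, which
splits into circuits `C₁, …, Cₘ`; lifting this splitting, the simplices of `S` avoiding `uv`
split into pieces `Pᵢ` with `Pᵢ/uv = Cᵢ`. Each piece is closed up into a cycle `Sᵢ` by adding the
`(k+1)`-sets `K ⊇ {u, v}` with `K ∖ {v}` on the boundary of `Pᵢ`; since `Pᵢ/uv` is a cycle,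
`K ∖ {u}` is then on that boundary as well, so `K` is a clique of `G(S)`. `Sᵢ` is a circuit
because a subcycle contracts to a subcycle of `Cᵢ`, and a cycle without repeated simplices all
of which contain `v` is empty. By the same parity argument two such cycles agreeing away from
`v` are equal, which gives `S = S₁ △ ⋯ △ Sₘ`; and if (e) failed for some `I`, then
`△_{i ∈ I} Sᵢ` would be a proper subcycle of `S`.
-/

lemma Multiset.countP_eq_add_of_iff {α : Type*} {p q r : α → Prop} [DecidablePred p]
    [DecidablePred q] [DecidablePred r] {s : Multiset α} (h : ∀ a ∈ s, r a ↔ p a ∨ q a)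
    (hpq : ∀ a ∈ s, ¬ (p a ∧ q a)) : s.countP r = s.countP p + s.countP q := by
  induction s using Multiset.induction_on with
  | empty => simp
  | cons a s ih =>
    simp only [Multiset.countP_cons, ih (fun b hb => h b (Multiset.mem_cons_of_mem hb))
      (fun b hb => hpq b (Multiset.mem_cons_of_mem hb))]
    have ha := h a (Multiset.mem_cons_self a s)
    have hpqa := hpq a (Multiset.mem_cons_self a s)
    split_ifs <;> grind

lemma Multiset.exists_le_map_eq_of_le_map {α β : Type*} [DecidableEq α] {f : α → β}
    {s : Multiset α} {t : Multiset β} (h : t ≤ s.map f) : ∃ s' ≤ s, s'.map f = t := by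
  induction t using Multiset.induction_on generalizing s with
  | empty => exact ⟨0, Multiset.zero_le _, Multiset.map_zero f⟩
  | cons b t ih =>
    obtain ⟨a, ha, rfl⟩ := Multiset.mem_map.1 (Multiset.mem_of_le h (Multiset.mem_cons_self b t))
    rw [← Multiset.cons_erase ha, Multiset.map_cons, Multiset.cons_le_cons_iff] at h
    obtain ⟨s', hs', rfl⟩ := ih h
    exact ⟨a ::ₘ s', (Multiset.cons_le_cons a hs').trans (Multiset.cons_erase ha).le,
      Multiset.map_cons f a s'⟩

lemma Multiset.exists_list_sum_eq_of_sum_eq_map {α β : Type*} [DecidableEq α] (f : α → β)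
    (L : List (Multiset β)) {s : Multiset α} (hL : L.sum = s.map f) :
    ∃ L' : List (Multiset α), L'.map (Multiset.map f) = L ∧ L'.sum = s := by
  induction L generalizing s with
  | nil => exact ⟨[], rfl, (Multiset.map_eq_zero.1 hL.symm).symm⟩
  | cons t L ih =>
    rw [List.sum_cons] at hL
    obtain ⟨s₁, hs₁, hmap⟩ := Multiset.exists_le_map_eq_of_le_map (hL ▸ le_self_add :)
    have hrest : L.sum = (s - s₁).map f := by
      rw [← add_right_inj t, hL, ← hmap, ← Multiset.map_add, add_tsub_cancel_of_le hs₁]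
    obtain ⟨L', hL', hsum⟩ := ih hrest
    exact ⟨s₁ :: L', by simp [hmap, hL'], by rw [List.sum_cons, hsum, add_tsub_cancel_of_le hs₁]⟩

lemma Multiset.existsUnique_mem_of_nodup_sum {α ι : Type*} [Fintype ι] [DecidableEq ι]
    {P : ι → Multiset α} (hnd : (∑ i, P i).Nodup) {a : α} (ha : a ∈ ∑ i, P i) :
    ∃! i, a ∈ P i := by
  obtain ⟨i, -, hi⟩ := Multiset.mem_sum.1 ha
  refine ⟨i, hi, fun j hj => Classical.byContradiction fun hji => ?_⟩
  have hle : P j + P i ≤ ∑ i, P i := by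
    rw [← Finset.sum_pair hji]
    exact Finset.sum_le_sum_of_subset (Finset.subset_univ _)
  exact Multiset.disjoint_left.1 (Multiset.nodup_add.1 (Multiset.nodup_of_le hle hnd)).2.2 hj hi

lemma Finset.card_insert_erase {α : Type*} [DecidableEq α] {s : Finset α} {a b : α} (ha : a ∈ s)
    (hb : b ∉ s) : (insert b (s.erase a)).card = s.card := by
  rw [Finset.card_insert_of_notMem fun h => hb (Finset.mem_of_mem_erase h),
    Finset.card_erase_add_one ha]

lemma Nat.even_add_ite_odd (n : ℕ) : Even (n + if Odd n then 1 else 0) := by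
  split_ifs with h
  exacts [h.add_one, by simpa using h]

section Cycles

variable {k : ℕ}

lemma simplexCount_add (S T : Multiset (Finset ℕ)) (F : Finset ℕ) :
    simplexCount (S + T) F = simplexCount S F + simplexCount T F :=
  Multiset.countP_add _ _ _

lemma isSimpCycle_zero : IsSimpCycle k 0 :=
  ⟨by simp [IsMultiComplex], fun _ _ => by simp [simplexCount]⟩

lemma IsSimpCycle.sub {S T : Multiset (Finset ℕ)} (hS : IsSimpCycle k S) (hT : IsSimpCycle k T)
    (hTS : T ≤ S) : IsSimpCycle k (S - T) := by
  refine ⟨fun U hU => hS.1 U (Multiset.mem_of_le (Multiset.sub_le_self S T) hU), fun F hF => ?_⟩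
  have h := hS.2 F hF
  rw [← add_tsub_cancel_of_le hTS, simplexCount_add] at h
  exact (Nat.even_add.1 h).1 (hT.2 F hF)

lemma IsSimpCircuit.eq_of_le {S T : Multiset (Finset ℕ)} (hS : IsSimpCircuit k S)
    (hT : IsSimpCycle k T) (hTS : T ≤ S) (hT0 : T ≠ 0) : T = S :=
  Classical.byContradiction fun h => hS.2.2 T hTS hT0 h hT

lemma IsSimpCycle.exists_circuit_decomposition {S : Multiset (Finset ℕ)} (hS : IsSimpCycle k S)
    (hS0 : S ≠ 0) :
    ∃ L : List (Multiset (Finset ℕ)), L ≠ [] ∧ (∀ C ∈ L, IsSimpCircuit k C) ∧ L.sum = S := by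
  induction hn : Multiset.card S using Nat.strong_induction_on generalizing S with
  | _ n ih =>
  by_cases hcirc : IsSimpCircuit k S
  · exact ⟨[S], List.cons_ne_nil _ _, by simpa using hcirc, List.sum_singleton⟩
  obtain ⟨T, hTS, hT0, hTne, hT⟩ : ∃ T ≤ S, T ≠ 0 ∧ T ≠ S ∧ IsSimpCycle k T := by
    by_contra! h
    exact hcirc ⟨hS, hS0, h⟩
  have hcard : 0 < Multiset.card T ∧ Multiset.card T < n :=
    ⟨Multiset.card_pos.2 hT0, hn ▸ Multiset.card_lt_card (lt_of_le_of_ne hTS hTne)⟩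
  have hST0 : S - T ≠ 0 := fun h => hTne (le_antisymm hTS (tsub_eq_zero_iff_le.1 h))
  obtain ⟨L₁, hL₁, hC₁, hsum₁⟩ := ih _ hcard.2 hT hT0 rfl
  obtain ⟨L₂, -, hC₂, hsum₂⟩ := ih (Multiset.card (S - T))
    (by rw [Multiset.card_sub hTS]; omega) (hS.sub hT hTS) hST0 rfl
  refine ⟨L₁ ++ L₂, by simp [hL₁], fun C hC => ?_, ?_⟩
  · rcases List.mem_append.1 hC with hC | hC
    exacts [hC₁ C hC, hC₂ C hC]
  · rw [List.sum_append, hsum₁, hsum₂, add_tsub_cancel_of_le hTS]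

lemma IsSimpCircuit.nodup {S : Multiset (Finset ℕ)} (hS : IsSimpCircuit k S)
    (hnt : ¬ IsTrivialSimpCircuit S) : S.Nodup := by
  rw [Multiset.nodup_iff_count_le_one]
  by_contra! ⟨U, hU⟩
  have hUS : U ∈ S := Multiset.count_pos.1 (by omega)
  have hle : ({U, U} : Multiset (Finset ℕ)) ≤ S :=
    Multiset.le_count_iff_replicate_le.1 (show 2 ≤ Multiset.count U S by omega)
  have hcyc : IsSimpCycle k {U, U} :=
    ⟨by simpa [IsMultiComplex] using hS.1.1 U hUS, fun F _ => by
      by_cases h : F ⊆ U <;> simp [simplexCount, ← Multiset.cons_zero, h]⟩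
  exact hnt ⟨U, (hS.eq_of_le hcyc hle (by simp)).symm⟩

lemma simplexCount_eq_filter_add_count {S : Multiset (Finset ℕ)} (hS : IsMultiComplex k S)
    {F : Finset ℕ} (hF : F.card = k) {w : ℕ} (hwF : w ∉ F) (p : Finset ℕ → Prop)
    [DecidablePred p] (hp : ∀ U ∈ S, F ⊆ U → (p U ↔ w ∉ U)) :
    simplexCount S F = simplexCount (S.filter p) F + S.count (insert w F) := by
  rw [simplexCount, Multiset.countP_eq_countP_filter_add S _ p]
  congr 1
  rw [Multiset.countP_filter, Multiset.count]
  refine Multiset.countP_congr rfl fun U hU => propext ⟨fun ⟨hFU, hpU⟩ => ?_, ?_⟩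
  · have hwU : insert w F ⊆ U := Finset.insert_subset (not_not.1 ((hp U hU hFU).not.1 hpU)) hFU
    exact Finset.eq_of_subset_of_card_le hwU (by rw [hS U hU, Finset.card_insert_of_notMem hwF, hF])
  · rintro rfl
    have hFU := Finset.subset_insert w F
    exact ⟨hFU, (hp _ hU hFU).not.2 (not_not.2 (Finset.mem_insert_self w F))⟩

lemma simplexCount_eq_count_insert {S : Multiset (Finset ℕ)} (hS : IsMultiComplex k S)
    {F : Finset ℕ} (hF : F.card = k) {w : ℕ} (hwF : w ∉ F) (hw : ∀ U ∈ S, w ∈ U) :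
    simplexCount S F = S.count (insert w F) := by
  rw [simplexCount_eq_filter_add_count hS hF hwF (fun _ => False) (fun U hU _ => by simp [hw U hU])]
  simp [simplexCount]

lemma simplexCount_erase_eq {S : Multiset (Finset ℕ)} (hS : IsMultiComplex k S) {K : Finset ℕ}
    (hK : K.card = k + 1) {w : ℕ} (hwK : w ∈ K) :
    simplexCount S (K.erase w) = simplexCount (S.filter (w ∉ ·)) (K.erase w) + S.count K := by
  have h := simplexCount_eq_filter_add_count hS (by simp [hwK, hK]) (Finset.notMem_erase w K)
    (w ∉ ·) fun _ _ _ => Iff.rfl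
  rwa [Finset.insert_erase hwK] at h

/-- A simplex `K ∋ w` is the only simplex through `w` containing `K ∖ {w}`, so the parity at
`K ∖ {w}` detects whether `K` is present. -/
lemma IsSimpCycle.eq_of_mem_iff {A B : Multiset (Finset ℕ)} (hA : IsSimpCycle k A)
    (hB : IsSimpCycle k B) (hAnd : A.Nodup) (hBnd : B.Nodup) (w : ℕ)
    (hAB : ∀ U, w ∉ U → (U ∈ A ↔ U ∈ B)) : A = B := by
  have hoff : A.filter (w ∉ ·) = B.filter (w ∉ ·) :=
    (Multiset.Nodup.ext (hAnd.filter _) (hBnd.filter _)).2 fun U => by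
      simp only [Multiset.mem_filter]
      exact ⟨fun h => ⟨(hAB U h.2).1 h.1, h.2⟩, fun h => ⟨(hAB U h.2).2 h.1, h.2⟩⟩
  refine (Multiset.Nodup.ext hAnd hBnd).2 fun K => ?_
  by_cases hwK : w ∈ K
  swap
  · exact hAB K hwK
  by_cases hK : K ∈ A ∨ K ∈ B
  swap
  · exact iff_of_false (fun h => hK (Or.inl h)) (fun h => hK (Or.inr h))
  have hcard : K.card = k + 1 := hK.elim (hA.1 K) (hB.1 K)
  have hF : (K.erase w).card = k := by simp [hwK, hcard]
  have hAe := hA.2 _ hF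
  have hBe := hB.2 _ hF
  rw [simplexCount_erase_eq hA.1 hcard hwK, Multiset.count_eq_of_nodup hAnd] at hAe
  rw [simplexCount_erase_eq hB.1 hcard hwK, Multiset.count_eq_of_nodup hBnd, ← hoff] at hBe
  split_ifs at hAe hBe <;> grind

lemma IsSimpCycle.eq_zero_of_forall_mem {S : Multiset (Finset ℕ)} (hS : IsSimpCycle k S)
    (hnd : S.Nodup) {w : ℕ} (hw : ∀ U ∈ S, w ∈ U) : S = 0 :=
  hS.eq_of_mem_iff isSimpCycle_zero hnd Multiset.nodup_zero w fun U hwU =>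
    iff_of_false (fun hU => hwU (hw U hU)) (Multiset.notMem_zero U)

lemma IsSimpCycle.exists_mem_erase_subset {S : Multiset (Finset ℕ)} (hS : IsSimpCycle k S)
    (hnd : S.Nodup) {U : Finset ℕ} (hU : U ∈ S) {w : ℕ} (hwU : w ∈ U) :
    ∃ U' ∈ S, U.erase w ⊆ U' ∧ w ∉ U' := by
  have hcard := hS.1 U hU
  have h := hS.2 (U.erase w) (by simp [hwU, hcard])
  rw [simplexCount_erase_eq hS.1 hcard hwU, Multiset.count_eq_one_of_mem hnd hU] at h
  obtain ⟨U', hU', hsub⟩ := Multiset.countP_pos.1 (show 0 < simplexCount _ _ from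
    Nat.pos_of_ne_zero fun h0 => by rw [h0] at h; exact Nat.not_even_one h)
  obtain ⟨hU'S, hwU'⟩ := Multiset.mem_filter.1 hU'
  exact ⟨U', hU'S, hsub, hwU'⟩

end Cycles

def mergeVertex (u v : ℕ) (U : Finset ℕ) : Finset ℕ :=
  if v ∈ U then insert u (U.erase v) else U

section Contraction

variable {k u v : ℕ}

lemma contractS_eq_map (S : Multiset (Finset ℕ)) (u v : ℕ) :
    contractS S u v = (S.filter fun U => ¬ (u ∈ U ∧ v ∈ U)).map (mergeVertex u v) :=
  rfl

lemma contractS_add (S T : Multiset (Finset ℕ)) :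
    contractS (S + T) u v = contractS S u v + contractS T u v := by
  simp only [contractS_eq_map, Multiset.filter_add, Multiset.map_add]

lemma contractS_mono {S T : Multiset (Finset ℕ)} (h : S ≤ T) : contractS S u v ≤ contractS T u v :=
  Multiset.map_le_map (Multiset.filter_le_filter _ h)

lemma contractS_eq_zero_iff {S : Multiset (Finset ℕ)} :
    contractS S u v = 0 ↔ ∀ U ∈ S, u ∈ U ∧ v ∈ U := by
  simp [contractS_eq_map, Multiset.filter_eq_nil]

lemma contractS_eq_map_of_forall_not_and {S : Multiset (Finset ℕ)}
    (hS : ∀ U ∈ S, ¬ (u ∈ U ∧ v ∈ U)) : contractS S u v = S.map (mergeVertex u v) := by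
  rw [contractS_eq_map, Multiset.filter_eq_self.2 hS]

lemma notMem_mergeVertex (huv : u ≠ v) (U : Finset ℕ) : v ∉ mergeVertex u v U := by
  unfold mergeVertex
  split_ifs with h
  · simp [huv.symm]
  · exact h

lemma card_mergeVertex {U : Finset ℕ} (hU : ¬ (u ∈ U ∧ v ∈ U)) :
    (mergeVertex u v U).card = U.card := by
  unfold mergeVertex
  split_ifs with h
  · exact Finset.card_insert_erase h fun hu => hU ⟨hu, h⟩
  · rfl

lemma subset_mergeVertex_iff_of_notMem {U F : Finset ℕ} (huF : u ∉ F) (hvF : v ∉ F) :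
    F ⊆ mergeVertex u v U ↔ F ⊆ U := by
  unfold mergeVertex
  split_ifs
  · rw [Finset.subset_insert_iff_of_notMem huF, Finset.subset_erase]
    exact and_iff_left hvF
  · rfl

lemma subset_mergeVertex_iff_of_mem {U F : Finset ℕ} (hU : ¬ (u ∈ U ∧ v ∈ U)) (huF : u ∈ F)
    (hvF : v ∉ F) : F ⊆ mergeVertex u v U ↔ F ⊆ U ∨ insert v (F.erase u) ⊆ U := by
  unfold mergeVertex
  split_ifs with h
  · have huU : u ∉ U := fun hu => hU ⟨hu, h⟩
    rw [Finset.subset_insert_iff, Finset.insert_subset_iff, Finset.subset_erase]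
    grind
  · grind

section Count

variable {R : Multiset (Finset ℕ)} {F : Finset ℕ}

lemma simplexCount_map_mergeVertex_of_mem_right (huv : u ≠ v) (hvF : v ∈ F) :
    simplexCount (R.map (mergeVertex u v)) F = 0 := by
  rw [simplexCount, Multiset.countP_eq_zero]
  rintro _ hW hFW
  obtain ⟨U, -, rfl⟩ := Multiset.mem_map.1 hW
  exact notMem_mergeVertex huv U (hFW hvF)

lemma simplexCount_map_mergeVertex_of_notMem (huF : u ∉ F) (hvF : v ∉ F) :
    simplexCount (R.map (mergeVertex u v)) F = simplexCount R F := by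
  rw [simplexCount, Multiset.countP_map, ← Multiset.countP_eq_card_filter]
  exact Multiset.countP_congr rfl fun U _ =>
    propext (subset_mergeVertex_iff_of_notMem huF hvF)

lemma simplexCount_map_mergeVertex_of_mem (hR : ∀ U ∈ R, ¬ (u ∈ U ∧ v ∈ U)) (huF : u ∈ F)
    (hvF : v ∉ F) : simplexCount (R.map (mergeVertex u v)) F =
      simplexCount R F + simplexCount R (insert v (F.erase u)) := by
  rw [simplexCount, Multiset.countP_map, ← Multiset.countP_eq_card_filter]
  refine Multiset.countP_eq_add_of_iff (fun U hU => subset_mergeVertex_iff_of_mem (hR U hU) huF hvF)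
    fun U hU ⟨hFU, hvU⟩ => hR U hU ⟨hFU huF, hvU (Finset.mem_insert_self v _)⟩

end Count

lemma simplexCount_contractS_of_notMem (huv : u ≠ v) {S : Multiset (Finset ℕ)}
    (hS : IsMultiComplex k S) {F : Finset ℕ} (hF : F.card = k) (huF : u ∉ F) (hvF : v ∉ F) :
    simplexCount (contractS S u v) F = simplexCount S F := by
  rw [contractS_eq_map, simplexCount_map_mergeVertex_of_notMem huF hvF, simplexCount,
    Multiset.countP_filter, simplexCount]
  refine Multiset.countP_congr rfl fun U hU => propext ⟨And.left, fun hFU => ⟨hFU, ?_⟩⟩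
  rintro ⟨huU, hvU⟩
  have h := Finset.card_le_card (Finset.insert_subset huU (Finset.insert_subset hvU hFU))
  rw [Finset.card_insert_of_notMem (by simp [huv, huF]), Finset.card_insert_of_notMem hvF, hF,
    hS U hU] at h
  omega

lemma simplexCount_contractS_add (huv : u ≠ v) {S : Multiset (Finset ℕ)}
    (hS : IsMultiComplex k S) {F : Finset ℕ} (hF : F.card = k) (huF : u ∈ F) (hvF : v ∉ F) :
    simplexCount (contractS S u v) F + 2 * S.count (insert v F) =
      simplexCount S F + simplexCount S (insert v (F.erase u)) := by
  have hG : (insert v (F.erase u)).card = k := by rw [Finset.card_insert_erase huF hvF, hF]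
  rw [simplexCount_eq_filter_add_count hS hF hvF (fun U => ¬ (u ∈ U ∧ v ∈ U))
      fun U _ hFU => by have := hFU huF; tauto,
    simplexCount_eq_filter_add_count hS hG (w := u) (by simp [huv])
      (fun U => ¬ (u ∈ U ∧ v ∈ U))
      fun U _ hGU => by have : v ∈ U := hGU (Finset.mem_insert_self v _); tauto,
    Finset.insert_comm, Finset.insert_erase huF, contractS_eq_map,
    simplexCount_map_mergeVertex_of_mem (fun U hU => (Multiset.mem_filter.1 hU).2) huF hvF]
  ring

lemma IsSimpCycle.contractS (huv : u ≠ v) {S : Multiset (Finset ℕ)} (hS : IsSimpCycle k S) :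
    IsSimpCycle k (contractS S u v) := by
  refine ⟨fun W hW => ?_, fun F hF => ?_⟩
  · rw [contractS_eq_map] at hW
    obtain ⟨U, hU, rfl⟩ := Multiset.mem_map.1 hW
    rw [card_mergeVertex (Multiset.mem_filter.1 hU).2]
    exact hS.1 U (Multiset.mem_of_mem_filter hU)
  by_cases hvF : v ∈ F
  · rw [contractS_eq_map, simplexCount_map_mergeVertex_of_mem_right huv hvF]
    exact Even.zero
  by_cases huF : u ∈ F
  · have h := simplexCount_contractS_add huv hS.1 hF huF hvF
    have hG : (insert v (F.erase u)).card = k := by rw [Finset.card_insert_erase huF hvF, hF]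
    have h1 := hS.2 F hF
    have h2 := hS.2 _ hG
    simp only [Nat.even_iff] at h1 h2 ⊢
    omega
  · rw [simplexCount_contractS_of_notMem huv hS.1 hF huF hvF]
    exact hS.2 F hF

lemma IsSimpCircuit.of_contractS (huv : u ≠ v) {D : Multiset (Finset ℕ)} (hD : IsSimpCycle k D)
    (hnd : D.Nodup) (hC : IsSimpCircuit k (contractS D u v)) : IsSimpCircuit k D := by
  refine ⟨hD, fun h0 => hC.2.1 (by simp [h0, contractS_eq_map]), fun T hTD hT0 hTD' hT => hTD' ?_⟩
  have hcT : contractS T u v ≠ 0 := fun h => hT0 <| hT.eq_zero_of_forall_mem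
    (Multiset.nodup_of_le hTD hnd) fun U hU => (contractS_eq_zero_iff.1 h U hU).2
  have hcTD := hC.eq_of_le (hT.contractS huv) (contractS_mono hTD) hcT
  have hrest : contractS (D - T) u v = 0 := by
    have h := contractS_add (u := u) (v := v) T (D - T)
    rw [add_tsub_cancel_of_le hTD, hcTD] at h
    exact add_eq_left.1 h.symm
  have h0 := (hD.sub hT hTD).eq_zero_of_forall_mem (Multiset.nodup_of_le tsub_le_self hnd)
    fun U hU => (contractS_eq_zero_iff.1 hrest U hU).2
  exact le_antisymm hTD (tsub_eq_zero_iff_le.1 h0)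

lemma ne_zero_of_isSimpCircuit_contractS {A : Multiset (Finset ℕ)}
    (hA : IsSimpCircuit k (contractS A u v)) : A ≠ 0 := fun h =>
  hA.2.1 (by simp [h, contractS_eq_map])

lemma exists_contractS_circuit_decomposition (huv : u ≠ v)
    {S : Multiset (Finset ℕ)} (hS : IsSimpCycle k S) (hnd : S.Nodup) (hS0 : S ≠ 0) :
    ∃ (m : ℕ) (P : Fin m → Multiset (Finset ℕ)), 0 < m ∧
      (∀ i, IsSimpCircuit k (contractS (P i) u v)) ∧
      ∑ i, P i = S.filter fun U => ¬ (u ∈ U ∧ v ∈ U) := by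
  have hT0 : contractS S u v ≠ 0 := fun h => hS0 <|
    hS.eq_zero_of_forall_mem hnd fun U hU => (contractS_eq_zero_iff.1 h U hU).2
  obtain ⟨L, hL0, hLC, hLsum⟩ := (hS.contractS huv).exists_circuit_decomposition hT0
  obtain ⟨L', hmap, hsum⟩ := Multiset.exists_list_sum_eq_of_sum_eq_map _ L hLsum
  refine ⟨L'.length, fun i => L'[i], List.length_pos_iff.2 fun h => hL0 (by simp [← hmap, h]),
    fun i => ?_, (Fin.sum_univ_getElem L').trans hsum⟩
  have hle : L'[i] ≤ S.filter fun U => ¬ (u ∈ U ∧ v ∈ U) := hsum ▸ List.le_sum_of_mem (by simp)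
  rw [contractS_eq_map_of_forall_not_and fun U hU =>
    (Multiset.mem_filter.1 (Multiset.mem_of_le hle hU)).2]
  exact hLC _ (hmap ▸ List.mem_map_of_mem (List.getElem_mem _))

end Contraction

/-- Double counting: a simplex `U ⊇ E` has exactly two vertices outside `E`. -/
lemma sum_simplexCount_insert {k : ℕ} {A : Multiset (Finset ℕ)} (hA : IsMultiComplex k A)
    {E X : Finset ℕ} (hE : E.card + 1 = k) (hXE : Disjoint X E)
    (hX : ∀ U ∈ A, E ⊆ U → U \ E ⊆ X) :
    ∑ x ∈ X, simplexCount A (insert x E) = 2 * simplexCount A E := by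
  induction A using Multiset.induction_on with
  | empty => simp [simplexCount]
  | cons U A ih =>
    have hU := hA U (Multiset.mem_cons_self U A)
    simp only [simplexCount, Multiset.countP_cons] at ih ⊢
    rw [Finset.sum_add_distrib, ih (fun W hW => hA W (Multiset.mem_cons_of_mem hW))
      (fun W hW => hX W (Multiset.mem_cons_of_mem hW)), mul_add, ← Finset.card_filter]
    congr 1
    split_ifs with hEU
    · have hfilter : X.filter (fun x => insert x E ⊆ U) = U \ E := by
        ext x
        simp only [Finset.mem_filter, Finset.insert_subset_iff, Finset.mem_sdiff]
        exact ⟨fun h => ⟨h.2.1, Finset.disjoint_left.1 hXE h.1⟩,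
          fun h => ⟨hX U (Multiset.mem_cons_self U A) hEU (Finset.mem_sdiff.2 h), h.1, hEU⟩⟩
      rw [hfilter, Finset.card_sdiff_of_subset hEU, hU]
      omega
    · exact Finset.card_eq_zero.2 (Finset.filter_eq_empty_iff.2 fun x _ h =>
        hEU ((Finset.subset_insert x E).trans h))

lemma simplexCount_val_eq_card_filter {k : ℕ} {B : Finset (Finset ℕ)} (hB : IsMultiComplex k B.val)
    {X : Finset ℕ} (hX : ∀ K ∈ B, K ⊆ X) {F : Finset ℕ} (hF : F.card = k) :
    simplexCount B.val F = #{x ∈ X \ F | insert x F ∈ B} := by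
  rw [simplexCount, Multiset.countP_eq_card_filter, ← Finset.filter_val, ← Finset.card_def,
    ← Finset.card_image_of_injOn (f := (insert · F))]
  · congr 1
    ext K
    simp only [Finset.mem_filter, Finset.mem_image, Finset.mem_sdiff]
    constructor
    · rintro ⟨hK, hFK⟩
      obtain ⟨x, hxF, rfl⟩ := Finset.exists_eq_insert_iff.2 ⟨hFK, by rw [hF, hB K hK]⟩
      exact ⟨x, ⟨⟨hX _ hK (Finset.mem_insert_self x F), hxF⟩, hK⟩, rfl⟩
    · rintro ⟨x, ⟨-, hK⟩, rfl⟩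
      exact ⟨hK, Finset.subset_insert x F⟩
  · intro x hx y _ hxy
    exact (Finset.insert_inj (Finset.mem_sdiff.1 (Finset.mem_filter.1 hx).1).2).1 hxy

/-- The simplices through `uv` that close up a family `A` of simplices avoiding the edge `uv`
into a cycle: the `K ∋ u, v` such that `K ∖ {v}` lies on the boundary of `A`. -/
noncomputable def uvFill (k : ℕ) (A : Multiset (Finset ℕ)) (u v : ℕ) : Finset (Finset ℕ) :=
  ((insert v (vertexSet A)).powersetCard (k + 1)).filter fun K =>
    u ∈ K ∧ v ∈ K ∧ Odd (simplexCount A (K.erase v))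

section Fill

variable {k u v : ℕ} {A : Multiset (Finset ℕ)}

lemma mem_uvFill {K : Finset ℕ} : K ∈ uvFill k A u v ↔
    K.card = k + 1 ∧ u ∈ K ∧ v ∈ K ∧ Odd (simplexCount A (K.erase v)) := by
  simp only [uvFill, Finset.mem_filter, Finset.mem_powersetCard]
  refine ⟨fun ⟨⟨_, hK⟩, h⟩ => ⟨hK, h⟩, fun ⟨hK, huK, hvK, hodd⟩ =>
    ⟨⟨fun x hx => ?_, hK⟩, huK, hvK, hodd⟩⟩
  obtain ⟨U, hU, hKU⟩ := Multiset.countP_pos.1 hodd.pos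
  rcases eq_or_ne x v with rfl | hxv
  · exact Finset.mem_insert_self x _
  · exact Finset.mem_insert_of_mem (mem_vertexSet_of_mem hU (hKU (Finset.mem_erase.2 ⟨hxv, hx⟩)))

lemma isMultiComplex_uvFill : IsMultiComplex k (uvFill k A u v).val :=
  fun _ hK => (mem_uvFill.1 hK).1

lemma simplexCount_uvFill_of_notMem (huv : u ≠ v) {F : Finset ℕ} (hF : F.card = k) (huF : u ∉ F)
    (hvF : v ∉ F) : simplexCount (uvFill k A u v).val F = 0 := by
  rw [simplexCount_eq_count_insert isMultiComplex_uvFill hF huF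
    fun K hK => (mem_uvFill.1 hK).2.1, Multiset.count_eq_zero]
  exact fun h => hvF (Finset.mem_of_mem_insert_of_ne (mem_uvFill.1 h).2.2.1 huv.symm)

lemma simplexCount_uvFill_of_mem_left {F : Finset ℕ} (hF : F.card = k) (huF : u ∈ F)
    (hvF : v ∉ F) :
    simplexCount (uvFill k A u v).val F = if Odd (simplexCount A F) then 1 else 0 := by
  rw [simplexCount_eq_count_insert isMultiComplex_uvFill hF hvF
    fun K hK => (mem_uvFill.1 hK).2.2.1, Multiset.count_eq_of_nodup (Finset.nodup _)]
  simp [mem_uvFill, Finset.erase_insert hvF, Finset.card_insert_of_notMem hvF, hF, huF]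

lemma odd_simplexCount_erase_iff (huv : u ≠ v) (hAuv : ∀ U ∈ A, ¬ (u ∈ U ∧ v ∈ U))
    (hcyc : IsSimpCycle k (contractS A u v)) {K : Finset ℕ} (hK : K.card = k + 1) (huK : u ∈ K)
    (hvK : v ∈ K) : Odd (simplexCount A (K.erase v)) ↔ Odd (simplexCount A (K.erase u)) := by
  have hF : (K.erase v).card = k := by simp [hvK, hK]
  have h := hcyc.2 _ hF
  rw [contractS_eq_map_of_forall_not_and hAuv, simplexCount_map_mergeVertex_of_mem hAuv
    (Finset.mem_erase.2 ⟨huv, huK⟩) (Finset.notMem_erase v K), Finset.erase_right_comm,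
    Finset.insert_erase (Finset.mem_erase.2 ⟨huv.symm, hvK⟩)] at h
  simpa only [← Nat.not_even_iff_odd, not_iff_not] using Nat.even_add.1 h

lemma simplexCount_uvFill_of_mem_right (huv : u ≠ v) (hAuv : ∀ U ∈ A, ¬ (u ∈ U ∧ v ∈ U))
    (hcyc : IsSimpCycle k (contractS A u v)) {F : Finset ℕ} (hF : F.card = k) (huF : u ∉ F)
    (hvF : v ∈ F) :
    simplexCount (uvFill k A u v).val F = if Odd (simplexCount A F) then 1 else 0 := by
  have hK : (insert u F).card = k + 1 := by rw [Finset.card_insert_of_notMem huF, hF]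
  rw [simplexCount_eq_count_insert isMultiComplex_uvFill hF huF
    fun K hK => (mem_uvFill.1 hK).2.1, Multiset.count_eq_of_nodup (Finset.nodup _)]
  simp only [Finset.mem_val, mem_uvFill, odd_simplexCount_erase_iff huv hAuv hcyc hK
    (Finset.mem_insert_self u F) (Finset.mem_insert_of_mem hvF), Finset.erase_insert huF]
  simp [hK, hvF]

lemma even_simplexCount_uvFill (huv : u ≠ v) (hA : IsMultiComplex k A)
    (hAuv : ∀ U ∈ A, ¬ (u ∈ U ∧ v ∈ U)) {F : Finset ℕ} (hF : F.card = k) (huF : u ∈ F)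
    (hvF : v ∈ F) : Even (simplexCount (uvFill k A u v).val F) := by
  set X := insert v (vertexSet A) \ F
  set E := F.erase v
  have hfilter : X.filter (fun x => insert x F ∈ uvFill k A u v) =
      X.filter (fun x => Odd (simplexCount A (insert x E))) := by
    refine Finset.filter_congr fun x hx => ?_
    have hxF := (Finset.mem_sdiff.1 hx).2
    have hxv : x ≠ v := fun h => hxF (h ▸ hvF)
    rw [mem_uvFill, Finset.erase_insert_of_ne hxv, Finset.card_insert_of_notMem hxF, hF]
    simp [E, huF, hvF]
  have hX : ∀ U ∈ A, E ⊆ U → U \ E ⊆ X := by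
    intro U hU hEU y hy
    obtain ⟨hyU, hyE⟩ := Finset.mem_sdiff.1 hy
    have hvU : v ∉ U := fun hvU => hAuv U hU ⟨hEU (Finset.mem_erase.2 ⟨huv, huF⟩), hvU⟩
    exact Finset.mem_sdiff.2 ⟨Finset.mem_insert_of_mem (mem_vertexSet_of_mem hU hyU),
      fun hyF => hyE (Finset.mem_erase.2 ⟨fun h => hvU (h ▸ hyU), hyF⟩)⟩
  have hXE : Disjoint X E := Finset.disjoint_left.2 fun x hx hxE =>
    (Finset.mem_sdiff.1 hx).2 (Finset.mem_of_mem_erase hxE)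
  rw [simplexCount_val_eq_card_filter isMultiComplex_uvFill (fun K hK => Finset.mem_powersetCard.1
    (Finset.mem_filter.1 hK).1 |>.1) hF, hfilter, ← Finset.even_sum_iff_even_card_odd,
    sum_simplexCount_insert hA (by rw [Finset.card_erase_add_one hvF, hF]) hXE hX]
  exact even_two_mul _

lemma isSimpCycle_add_uvFill (huv : u ≠ v) (hA : IsMultiComplex k A)
    (hAuv : ∀ U ∈ A, ¬ (u ∈ U ∧ v ∈ U)) (hcyc : IsSimpCycle k (contractS A u v)) :
    IsSimpCycle k (A + (uvFill k A u v).val) := by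
  refine ⟨fun K hK => (Multiset.mem_add.1 hK).elim (hA K) (isMultiComplex_uvFill K),
    fun F hF => ?_⟩
  rw [simplexCount_add]
  by_cases huF : u ∈ F <;> by_cases hvF : v ∈ F
  · have hA0 : simplexCount A F = 0 := Multiset.countP_eq_zero.2 fun U hU hFU =>
      hAuv U hU ⟨hFU huF, hFU hvF⟩
    rw [hA0, zero_add]
    exact even_simplexCount_uvFill huv hA hAuv hF huF hvF
  · rw [simplexCount_uvFill_of_mem_left hF huF hvF]
    exact Nat.even_add_ite_odd _
  · rw [simplexCount_uvFill_of_mem_right huv hAuv hcyc hF huF hvF]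
    exact Nat.even_add_ite_odd _
  · have h := hcyc.2 F hF
    rw [contractS_eq_map_of_forall_not_and hAuv,
      simplexCount_map_mergeVertex_of_notMem huF hvF] at h
    rwa [simplexCount_uvFill_of_notMem huv hF huF hvF, add_zero]

end Fill

/-- Applied to the pieces `Pᵢ`, these are the circuits `Sᵢ` of the decomposition. -/
noncomputable def uvCompletion (k : ℕ) (A : Multiset (Finset ℕ)) (u v : ℕ) :
    Multiset (Finset ℕ) :=
  A + (uvFill k A u v).val

section Completion

variable {k u v : ℕ} {A : Multiset (Finset ℕ)}

lemma mem_uvCompletion_iff_of_not_and {U : Finset ℕ} (hU : ¬ (u ∈ U ∧ v ∈ U)) :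
    U ∈ uvCompletion k A u v ↔ U ∈ A := by
  rw [uvCompletion, Multiset.mem_add, Finset.mem_val, mem_uvFill]
  exact or_iff_left fun h => hU ⟨h.2.1, h.2.2.1⟩

lemma nodup_uvCompletion (hA : A.Nodup) (hAuv : ∀ U ∈ A, ¬ (u ∈ U ∧ v ∈ U)) :
    (uvCompletion k A u v).Nodup :=
  Multiset.nodup_add.2 ⟨hA, Finset.nodup _, Multiset.disjoint_left.2 fun hKA hK =>
    hAuv _ hKA ⟨(mem_uvFill.1 hK).2.1, (mem_uvFill.1 hK).2.2.1⟩⟩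

lemma contractS_uvCompletion : contractS (uvCompletion k A u v) u v = contractS A u v := by
  rw [uvCompletion, contractS_add, contractS_eq_zero_iff.2 fun K hK =>
    ⟨(mem_uvFill.1 hK).2.1, (mem_uvFill.1 hK).2.2.1⟩, add_zero]

lemma isSimpCircuit_uvCompletion (huv : u ≠ v) (hA : IsMultiComplex k A) (hAnd : A.Nodup)
    (hAuv : ∀ U ∈ A, ¬ (u ∈ U ∧ v ∈ U)) (hC : IsSimpCircuit k (contractS A u v)) :
    IsSimpCircuit k (uvCompletion k A u v) :=
  IsSimpCircuit.of_contractS huv (isSimpCycle_add_uvFill huv hA hAuv hC.1)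
    (nodup_uvCompletion hAnd hAuv) (by rwa [contractS_uvCompletion])

end Completion

lemma isClique_of_erase_subset {S : Multiset (Finset ℕ)} {u v : ℕ} (huv : (graphOf S).Adj u v)
    {K : Finset ℕ} (hv : ∃ U ∈ S, K.erase v ⊆ U) (hu : ∃ U ∈ S, K.erase u ⊆ U) :
    (graphOf S).IsClique K := by
  obtain ⟨U₁, hU₁, hKU₁⟩ := hv
  obtain ⟨U₂, hU₂, hKU₂⟩ := hu
  refine ⟨fun x hx => ?_, fun x hx y hy hxy => ?_⟩
  · rcases eq_or_ne x v with rfl | hxv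
    · exact mem_vertexSet_of_mem hU₂ (hKU₂ (Finset.mem_erase.2 ⟨huv.1.symm, hx⟩))
    · exact mem_vertexSet_of_mem hU₁ (hKU₁ (Finset.mem_erase.2 ⟨hxv, hx⟩))
  by_cases hv : x ≠ v ∧ y ≠ v
  · exact ⟨hxy, U₁, hU₁, hKU₁ (Finset.mem_erase.2 ⟨hv.1, hx⟩), hKU₁ (Finset.mem_erase.2 ⟨hv.2, hy⟩)⟩
  by_cases hu : x ≠ u ∧ y ≠ u
  · exact ⟨hxy, U₂, hU₂, hKU₂ (Finset.mem_erase.2 ⟨hu.1, hx⟩), hKU₂ (Finset.mem_erase.2 ⟨hu.2, hy⟩)⟩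
  have hne := huv.1
  obtain ⟨rfl, rfl⟩ | ⟨rfl, rfl⟩ : (x = u ∧ y = v) ∨ (x = v ∧ y = u) := by grind
  exacts [huv, (graphOf S).symm huv]

lemma isClique_of_mem_uvFill {k u v : ℕ} {S A : Multiset (Finset ℕ)}
    (huv : (graphOf S).Adj u v) (hAS : A ≤ S) (hAuv : ∀ U ∈ A, ¬ (u ∈ U ∧ v ∈ U))
    (hcyc : IsSimpCycle k (contractS A u v)) {K : Finset ℕ} (hK : K ∈ uvFill k A u v) :
    (graphOf S).IsClique K := by
  obtain ⟨hcard, huK, hvK, hodd⟩ := mem_uvFill.1 hK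
  obtain ⟨U₁, hU₁, hKU₁⟩ := Multiset.countP_pos.1 hodd.pos
  obtain ⟨U₂, hU₂, hKU₂⟩ := Multiset.countP_pos.1
    ((odd_simplexCount_erase_iff huv.1 hAuv hcyc hcard huK hvK).1 hodd).pos
  exact isClique_of_erase_subset huv ⟨U₁, Multiset.mem_of_le hAS hU₁, hKU₁⟩
    ⟨U₂, Multiset.mem_of_le hAS hU₂, hKU₂⟩

/-- The symmetric difference `△_{i ∈ I} D i`. -/
def symmDiffFamily {ι : Type*} (I : Finset ι) (D : ι → Multiset (Finset ℕ)) :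
    Multiset (Finset ℕ) :=
  ((I.biUnion fun i => (D i).toFinset).filter fun K => Odd #{i ∈ I | K ∈ D i}).val

section SymmDiff

variable {ι : Type*} {I : Finset ι} {D : ι → Multiset (Finset ℕ)}

lemma mem_symmDiffFamily {K : Finset ℕ} : K ∈ symmDiffFamily I D ↔ Odd #{i ∈ I | K ∈ D i} := by
  rw [symmDiffFamily, Finset.mem_val, Finset.mem_filter, and_iff_right_iff_imp]
  intro hodd
  obtain ⟨i, hi⟩ := Finset.card_pos.1 hodd.pos
  obtain ⟨hiI, hK⟩ := Finset.mem_filter.1 hi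
  exact Finset.mem_biUnion.2 ⟨i, hiI, Multiset.mem_toFinset.2 hK⟩

lemma simplexCount_eq_card_filter_of_nodup {D : Multiset (Finset ℕ)} (hnd : D.Nodup)
    {𝒦 : Finset (Finset ℕ)} (h𝒦 : ∀ K ∈ D, K ∈ 𝒦) (F : Finset ℕ) :
    simplexCount D F = #{K ∈ 𝒦 | K ∈ D ∧ F ⊆ K} := by
  rw [simplexCount, Multiset.countP_eq_card_filter,
    ← Multiset.toFinset_card_of_nodup (hnd.filter _)]
  congr 1
  ext K
  simp only [Multiset.mem_toFinset, Multiset.mem_filter, Finset.mem_filter]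
  exact ⟨fun h => ⟨h𝒦 K h.1, h⟩, And.right⟩

lemma isSimpCycle_symmDiffFamily {k : ℕ} (hD : ∀ i ∈ I, IsSimpCycle k (D i))
    (hnd : ∀ i ∈ I, (D i).Nodup) : IsSimpCycle k (symmDiffFamily I D) := by
  refine ⟨fun K hK => ?_, fun F hF => ?_⟩
  · obtain ⟨i, hi⟩ := Finset.card_pos.1 (mem_symmDiffFamily.1 hK).pos
    obtain ⟨hiI, hKi⟩ := Finset.mem_filter.1 hi
    exact (hD i hiI).1 K hKi
  set 𝒦 := I.biUnion fun i => (D i).toFinset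
  have hsum : ∑ i ∈ I, simplexCount (D i) F =
      ∑ K ∈ 𝒦, if F ⊆ K then #{i ∈ I | K ∈ D i} else 0 := by
    rw [Finset.sum_congr rfl fun i hi => simplexCount_eq_card_filter_of_nodup (hnd i hi) (𝒦 := 𝒦)
      (fun K hK => Finset.mem_biUnion.2 ⟨i, hi, Multiset.mem_toFinset.2 hK⟩) F]
    simp_rw [Finset.card_filter]
    rw [Finset.sum_comm]
    refine Finset.sum_congr rfl fun K _ => ?_
    split_ifs with hFK <;> simp [hFK]
  have heven := Finset.even_sum _ fun i hi => (hD i hi).2 F hF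
  rw [hsum, Finset.even_sum_iff_even_card_odd] at heven
  convert heven using 2
  rw [simplexCount, symmDiffFamily, Multiset.countP_eq_card_filter, ← Finset.filter_val,
    ← Finset.card_def, Finset.filter_filter]
  refine congrArg _ (Finset.filter_congr fun K _ => ?_)
  split_ifs with hFK <;> simp [hFK]

end SymmDiff

section Decomposition

variable {ι : Type*} [Fintype ι] {k u v : ℕ} {S : Multiset (Finset ℕ)}
  {P : ι → Multiset (Finset ℕ)}

lemma le_of_sum_eq_filter (hsum : ∑ i, P i = S.filter fun U => ¬ (u ∈ U ∧ v ∈ U)) (i : ι) :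
    P i ≤ S.filter fun U => ¬ (u ∈ U ∧ v ∈ U) :=
  hsum ▸ Finset.single_le_sum (fun _ _ => zero_le) (Finset.mem_univ i)

lemma mem_of_mem_of_sum_eq_filter (hsum : ∑ i, P i = S.filter fun U => ¬ (u ∈ U ∧ v ∈ U))
    {i : ι} {U : Finset ℕ} (hU : U ∈ P i) : U ∈ S ∧ ¬ (u ∈ U ∧ v ∈ U) :=
  Multiset.mem_filter.1 (Multiset.mem_of_le (le_of_sum_eq_filter hsum i) hU)

lemma nodup_uvCompletion_of_sum_eq (hnd : S.Nodup)
    (hsum : ∑ i, P i = S.filter fun U => ¬ (u ∈ U ∧ v ∈ U)) (i : ι) :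
    (uvCompletion k (P i) u v).Nodup :=
  nodup_uvCompletion (Multiset.nodup_of_le ((le_of_sum_eq_filter hsum i).trans
    (Multiset.filter_le _ _)) hnd) fun _ hU => (mem_of_mem_of_sum_eq_filter hsum hU).2

lemma isSimpCircuit_uvCompletion_of_sum_eq (huv : u ≠ v) (hS : IsMultiComplex k S)
    (hnd : S.Nodup) (hsum : ∑ i, P i = S.filter fun U => ¬ (u ∈ U ∧ v ∈ U))
    (hP : ∀ i, IsSimpCircuit k (contractS (P i) u v)) (i : ι) :
    IsSimpCircuit k (uvCompletion k (P i) u v) :=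
  isSimpCircuit_uvCompletion huv (fun U hU => hS U (mem_of_mem_of_sum_eq_filter hsum hU).1)
    (Multiset.nodup_of_le ((le_of_sum_eq_filter hsum i).trans (Multiset.filter_le _ _)) hnd)
    (fun _ hU => (mem_of_mem_of_sum_eq_filter hsum hU).2) (hP i)

lemma existsUnique_mem_uvCompletion [DecidableEq ι] (hnd : S.Nodup)
    (hsum : ∑ i, P i = S.filter fun U => ¬ (u ∈ U ∧ v ∈ U)) {U : Finset ℕ} (hU : U ∈ S)
    (hUuv : ¬ (u ∈ U ∧ v ∈ U)) : ∃! i, U ∈ uvCompletion k (P i) u v := by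
  simp_rw [mem_uvCompletion_iff_of_not_and hUuv]
  exact Multiset.existsUnique_mem_of_nodup_sum (hsum ▸ hnd.filter _)
    (hsum ▸ Multiset.mem_filter.2 ⟨hU, hUuv⟩)

lemma card_filter_mem_uvCompletion [DecidableEq ι] (hnd : S.Nodup)
    (hsum : ∑ i, P i = S.filter fun U => ¬ (u ∈ U ∧ v ∈ U)) {i₀ : ι} {U : Finset ℕ}
    (hU : U ∈ P i₀) (I : Finset ι) :
    #{i ∈ I | U ∈ uvCompletion k (P i) u v} = if i₀ ∈ I then 1 else 0 := by
  obtain ⟨hUS, hUuv⟩ := mem_of_mem_of_sum_eq_filter hsum hU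
  have hU' := (mem_uvCompletion_iff_of_not_and (k := k) hUuv).2 hU
  have hfilter : {i ∈ I | U ∈ uvCompletion k (P i) u v} = {i ∈ I | i = i₀} :=
    Finset.filter_congr fun i _ =>
      ⟨fun h => (existsUnique_mem_uvCompletion hnd hsum hUS hUuv).unique h hU', fun h => h ▸ hU'⟩
  rw [hfilter, Finset.filter_eq']
  split_ifs <;> rfl

lemma eq_symmDiffFamily_uvCompletion [DecidableEq ι] (huv : u ≠ v) (hS : IsSimpCycle k S)
    (hnd : S.Nodup) (hsum : ∑ i, P i = S.filter fun U => ¬ (u ∈ U ∧ v ∈ U))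
    (hP : ∀ i, IsSimpCircuit k (contractS (P i) u v)) :
    S = symmDiffFamily Finset.univ fun i => uvCompletion k (P i) u v := by
  refine hS.eq_of_mem_iff (isSimpCycle_symmDiffFamily
    (fun i _ => (isSimpCircuit_uvCompletion_of_sum_eq huv hS.1 hnd hsum hP i).1)
    fun i _ => nodup_uvCompletion_of_sum_eq hnd hsum i) hnd (Finset.nodup _) v fun U hvU => ?_
  have hUuv : ¬ (u ∈ U ∧ v ∈ U) := fun h => hvU h.2
  rw [mem_symmDiffFamily]
  by_cases hU : U ∈ S
  · obtain ⟨i₀, -, hi₀⟩ := Multiset.mem_sum.1 (hsum ▸ Multiset.mem_filter.2 ⟨hU, hUuv⟩ :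
      U ∈ ∑ i, P i)
    simp [hU, card_filter_mem_uvCompletion hnd hsum hi₀]
  · refine iff_of_false hU fun hodd => ?_
    obtain ⟨i, hi⟩ := Finset.card_pos.1 hodd.pos
    rw [Finset.mem_filter, mem_uvCompletion_iff_of_not_and hUuv] at hi
    exact hU (mem_of_mem_of_sum_eq_filter hsum hi.2).1

lemma card_eq_and_isClique_of_mem_uvCompletion (huv : (graphOf S).Adj u v)
    (hsum : ∑ i, P i = S.filter fun U => ¬ (u ∈ U ∧ v ∈ U))
    (hP : ∀ i, IsSimpCircuit k (contractS (P i) u v)) {i : ι} {K : Finset ℕ}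
    (hK : K ∈ uvCompletion k (P i) u v) (hKS : K ∉ S) :
    K.card = k + 1 ∧ u ∈ K ∧ v ∈ K ∧ (graphOf S).IsClique K := by
  have hKfill : K ∈ uvFill k (P i) u v := (Multiset.mem_add.1 hK).resolve_left
    fun hKP => hKS (mem_of_mem_of_sum_eq_filter hsum hKP).1
  obtain ⟨hcard, huK, hvK, -⟩ := mem_uvFill.1 hKfill
  exact ⟨hcard, huK, hvK, isClique_of_mem_uvFill huv
    ((le_of_sum_eq_filter hsum i).trans (Multiset.filter_le _ _))
    (fun _ hU => (mem_of_mem_of_sum_eq_filter hsum hU).2) (hP i).1 hKfill⟩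

lemma adj_uvCompletion (huv : (graphOf S).Adj u v) (hS : IsSimpCircuit k S)
    (hsum : ∑ i, P i = S.filter fun U => ¬ (u ∈ U ∧ v ∈ U))
    (hP : ∀ i, IsSimpCircuit k (contractS (P i) u v)) (i : ι) :
    (graphOf (uvCompletion k (P i) u v)).Adj u v := by
  have hPS : P i ≤ S := (le_of_sum_eq_filter hsum i).trans (Multiset.filter_le _ _)
  have hPuv : ∀ U ∈ P i, ¬ (u ∈ U ∧ v ∈ U) := fun _ hU => (mem_of_mem_of_sum_eq_filter hsum hU).2
  obtain ⟨K, hK⟩ : (uvFill k (P i) u v).Nonempty := by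
    refine Finset.nonempty_iff_ne_empty.2 fun h0 => ?_
    have hcyc := isSimpCycle_add_uvFill huv.1 (fun U hU => hS.1.1 U (Multiset.mem_of_le hPS hU))
      hPuv (hP i).1
    rw [h0, Finset.empty_val, add_zero] at hcyc
    obtain ⟨-, U, hU, huU, hvU⟩ := huv
    have hPS' := hS.eq_of_le hcyc hPS (ne_zero_of_isSimpCircuit_contractS (hP i))
    exact hPuv U (hPS' ▸ hU) ⟨huU, hvU⟩
  obtain ⟨-, huK, hvK, -⟩ := mem_uvFill.1 hK
  exact ⟨huv.1, K, Multiset.mem_add.2 (Or.inr hK), huK, hvK⟩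

lemma exists_adj_uvCompletion_iff [Nonempty ι] (huv : (graphOf S).Adj u v)
    (hS : IsSimpCircuit k S) (hnd : S.Nodup)
    (hsum : ∑ i, P i = S.filter fun U => ¬ (u ∈ U ∧ v ∈ U))
    (hP : ∀ i, IsSimpCircuit k (contractS (P i) u v)) (x y : ℕ) :
    (∃ i, (graphOf (uvCompletion k (P i) u v)).Adj x y) ↔ (graphOf S).Adj x y := by
  refine ⟨fun ⟨i, hxy, K, hK, hxK, hyK⟩ => ?_, fun ⟨hxy, U, hU, hxU, hyU⟩ => ?_⟩
  · by_cases hKS : K ∈ S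
    · exact ⟨hxy, K, hKS, hxK, hyK⟩
    · exact (card_eq_and_isClique_of_mem_uvCompletion huv hsum hP hK hKS).2.2.2.2 x hxK y hyK hxy
  have hpiece : ∀ U ∈ S, ¬ (u ∈ U ∧ v ∈ U) → x ∈ U → y ∈ U →
      ∃ i, (graphOf (uvCompletion k (P i) u v)).Adj x y := fun U hU hUuv hxU hyU => by
    obtain ⟨i, -, hi⟩ := Multiset.mem_sum.1 (hsum ▸ Multiset.mem_filter.2 ⟨hU, hUuv⟩ :
      U ∈ ∑ i, P i)
    exact ⟨i, hxy, U, Multiset.mem_add.2 (Or.inl hi), hxU, hyU⟩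
  by_cases hUuv : u ∈ U ∧ v ∈ U
  swap
  · exact hpiece U hU hUuv hxU hyU
  -- `U` shares its face opposite `w` with a simplex avoiding `w`, hence avoiding the edge `uv`
  have hother : ∀ w, w = u ∨ w = v → w ∈ U → x ≠ w → y ≠ w →
      ∃ i, (graphOf (uvCompletion k (P i) u v)).Adj x y := fun w hw hwU hxw hyw => by
    obtain ⟨U', hU', hUU', hwU'⟩ := hS.1.exists_mem_erase_subset hnd hU hwU
    exact hpiece U' hU' (by rcases hw with rfl | rfl <;> tauto)
      (hUU' (Finset.mem_erase.2 ⟨hxw, hxU⟩)) (hUU' (Finset.mem_erase.2 ⟨hyw, hyU⟩))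
  by_cases hv : x ≠ v ∧ y ≠ v
  · exact hother v (Or.inr rfl) hUuv.2 hv.1 hv.2
  by_cases hu : x ≠ u ∧ y ≠ u
  · exact hother u (Or.inl rfl) hUuv.1 hu.1 hu.2
  have hne := huv.1
  obtain ⟨rfl, rfl⟩ | ⟨rfl, rfl⟩ : (x = u ∧ y = v) ∨ (x = v ∧ y = u) := by grind
  · exact ⟨Classical.arbitrary ι, adj_uvCompletion huv hS hsum hP _⟩
  · exact ⟨Classical.arbitrary ι, (graphOf _).symm (adj_uvCompletion huv hS hsum hP _)⟩

lemma symmDiffFamily_uvCompletion_le [DecidableEq ι] (huv : u ≠ v) (hS : IsSimpCycle k S)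
    (hnd : S.Nodup) (hsum : ∑ i, P i = S.filter fun U => ¬ (u ∈ U ∧ v ∈ U))
    (hP : ∀ i, IsSimpCircuit k (contractS (P i) u v)) {I : Finset ι}
    (hI : ∀ K ∉ S, Odd #{i ∈ I | K ∈ uvCompletion k (P i) u v} →
      ∀ j ∉ I, K ∉ uvCompletion k (P j) u v) :
    symmDiffFamily I (fun i => uvCompletion k (P i) u v) ≤ S := by
  refine (Multiset.le_iff_subset (Finset.nodup _)).2 fun K hK =>
    Classical.byContradiction fun hKS => hKS ?_
  have hodd := mem_symmDiffFamily.1 hK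
  rw [eq_symmDiffFamily_uvCompletion huv hS hnd hsum hP, mem_symmDiffFamily]
  convert hodd using 2
  ext j
  simp only [Finset.mem_filter, Finset.mem_univ, true_and]
  exact ⟨fun hKj => ⟨Classical.byContradiction fun hj => hI K hKS hodd j hj hKj, hKj⟩, And.right⟩

lemma exists_shared_uvClique_of_ne_univ [DecidableEq ι] (huv : (graphOf S).Adj u v)
    (hS : IsSimpCircuit k S) (hnd : S.Nodup)
    (hsum : ∑ i, P i = S.filter fun U => ¬ (u ∈ U ∧ v ∈ U))
    (hP : ∀ i, IsSimpCircuit k (contractS (P i) u v)) {I : Finset ι} (hI : I.Nonempty)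
    (hIu : I ≠ Finset.univ) :
    ∃ j ∉ I, ∃ K : Finset ℕ, K.card = k + 1 ∧ u ∈ K ∧ v ∈ K ∧ (graphOf S).IsClique K ∧ K ∉ S ∧
      Odd #{i ∈ I | K ∈ uvCompletion k (P i) u v} ∧ K ∈ uvCompletion k (P j) u v := by
  by_contra hcon
  -- otherwise `△_{i ∈ I} Sᵢ` is a proper subcycle of `S`
  have hWS := symmDiffFamily_uvCompletion_le huv.1 hS.1 hnd hsum hP fun K hKS hodd j hj hKj => by
    obtain ⟨i, hi⟩ := Finset.card_pos.1 hodd.pos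
    obtain ⟨hcard, huK, hvK, hcl⟩ :=
      card_eq_and_isClique_of_mem_uvCompletion huv hsum hP (Finset.mem_filter.1 hi).2 hKS
    exact hcon ⟨j, hj, K, hcard, huK, hvK, hcl, hKS, hodd, hKj⟩
  obtain ⟨i₀, hi₀⟩ := hI
  obtain ⟨j₀, hj₀⟩ : ∃ j, j ∉ I := by
    by_contra! h
    exact hIu (Finset.eq_univ_iff_forall.2 h)
  obtain ⟨U, hU⟩ := Multiset.exists_mem_of_ne_zero (ne_zero_of_isSimpCircuit_contractS (hP i₀))
  obtain ⟨U', hU'⟩ := Multiset.exists_mem_of_ne_zero (ne_zero_of_isSimpCircuit_contractS (hP j₀))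
  have hUW : U ∈ symmDiffFamily I fun i => uvCompletion k (P i) u v := by
    rw [mem_symmDiffFamily, card_filter_mem_uvCompletion hnd hsum hU I, if_pos hi₀]
    exact odd_one
  have hU'W : U' ∉ symmDiffFamily I fun i => uvCompletion k (P i) u v := by
    rw [mem_symmDiffFamily, card_filter_mem_uvCompletion hnd hsum hU' I, if_neg hj₀]
    exact Nat.not_odd_zero
  exact hS.2.2 _ hWS (fun h => Multiset.notMem_zero U (h ▸ hUW))
    (fun h => hU'W (h ▸ (mem_of_mem_of_sum_eq_filter hsum hU').1))
    (isSimpCycle_symmDiffFamily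
      (fun i _ => (isSimpCircuit_uvCompletion_of_sum_eq huv.1 hS.1.1 hnd hsum hP i).1)
      fun i _ => nodup_uvCompletion_of_sum_eq hnd hsum i)

end Decomposition

theorem fogelsanger_decomposition_general (k : ℕ)
    (S : Multiset (Finset ℕ)) (hS : IsSimpCircuit k S) (hnt : ¬ IsTrivialSimpCircuit S)
    (u v : ℕ) (huv : (graphOf S).Adj u v) :
    ∃ (m : ℕ) (Sf : Fin m → Multiset (Finset ℕ)), 1 ≤ m ∧
      (∀ i, IsSimpCircuit k (Sf i) ∧ ¬ IsTrivialSimpCircuit (Sf i)) ∧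
      (∀ i, IsSimpCircuit k (contractS (Sf i) u v)) ∧
      (∀ i, ∀ K ∈ Sf i, K ∉ S →
        K.card = k + 1 ∧ u ∈ K ∧ v ∈ K ∧ (graphOf S).IsClique K) ∧
      (∀ U ∈ S, ¬ (u ∈ U ∧ v ∈ U) → ∃! i, U ∈ Sf i) ∧
      (∀ U : Finset ℕ, U ∈ S ↔ Odd ((Finset.univ.filter fun i => U ∈ Sf i).card)) ∧
      (∀ i, (graphOf (Sf i)).Adj u v) ∧
      (∀ x y : ℕ, (∃ i, (graphOf (Sf i)).Adj x y) ↔ (graphOf S).Adj x y) ∧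
      (∀ I : Finset (Fin m), I.Nonempty → I ≠ Finset.univ →
        ∃ j ∉ I, ∃ K : Finset ℕ, K.card = k + 1 ∧ u ∈ K ∧ v ∈ K ∧
          (graphOf S).IsClique K ∧ K ∉ S ∧
          Odd ((I.filter fun i => K ∈ Sf i).card) ∧ K ∈ Sf j) := by
  have hnd := hS.nodup hnt
  obtain ⟨m, P, hm, hP, hsum⟩ := exists_contractS_circuit_decomposition huv.1 hS.1 hnd hS.2.1
  have : Nonempty (Fin m) := ⟨⟨0, hm⟩⟩
  have hS_eq := eq_symmDiffFamily_uvCompletion huv.1 hS.1 hnd hsum hP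
  refine ⟨m, fun i => uvCompletion k (P i) u v, hm, fun i => ⟨?_, ?_⟩,
    fun i => by rw [contractS_uvCompletion]; exact hP i, fun i K hK hKS =>
    card_eq_and_isClique_of_mem_uvCompletion huv hsum hP hK hKS,
    fun U hU hUuv => existsUnique_mem_uvCompletion hnd hsum hU hUuv,
    fun U => by rw [hS_eq]; exact mem_symmDiffFamily, adj_uvCompletion huv hS hsum hP,
    exists_adj_uvCompletion_iff huv hS hnd hsum hP,
    fun I hI hIu => exists_shared_uvClique_of_ne_univ huv hS hnd hsum hP hI hIu⟩
  · exact isSimpCircuit_uvCompletion_of_sum_eq huv.1 hS.1.1 hnd hsum hP i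
  · rintro ⟨U, hU⟩
    simpa [hU] using nodup_uvCompletion_of_sum_eq (k := k) hnd hsum i

theorem fogelsanger_decomposition (k : ℕ) (hk : 2 ≤ k)
    (S : Multiset (Finset ℕ)) (hS : IsSimpCircuit k S) (hnt : ¬ IsTrivialSimpCircuit S)
    (u v : ℕ) (huv : (graphOf S).Adj u v) :
    ∃ (m : ℕ) (Sf : Fin m → Multiset (Finset ℕ)), 1 ≤ m ∧
      (∀ i, IsSimpCircuit k (Sf i) ∧ ¬ IsTrivialSimpCircuit (Sf i)) ∧
      (∀ i, IsSimpCircuit k (contractS (Sf i) u v)) ∧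
      (∀ i, ∀ K ∈ Sf i, K ∉ S →
        K.card = k + 1 ∧ u ∈ K ∧ v ∈ K ∧ (graphOf S).IsClique K) ∧
      (∀ U ∈ S, ¬ (u ∈ U ∧ v ∈ U) → ∃! i, U ∈ Sf i) ∧
      (∀ U : Finset ℕ, U ∈ S ↔ Odd ((Finset.univ.filter fun i => U ∈ Sf i).card)) ∧
      (∀ i, (graphOf (Sf i)).Adj u v) ∧
      (∀ x y : ℕ, (∃ i, (graphOf (Sf i)).Adj x y) ↔ (graphOf S).Adj x y) ∧
      (∀ I : Finset (Fin m), I.Nonempty → I ≠ Finset.univ →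
        ∃ j ∉ I, ∃ K : Finset ℕ, K.card = k + 1 ∧ u ∈ K ∧ v ∈ K ∧
          (graphOf S).IsClique K ∧ K ∉ S ∧
          Odd ((I.filter fun i => K ∈ Sf i).card) ∧ K ∈ Sf j) :=
  fogelsanger_decomposition_general k S hS hnt u v huv
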